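/- In the setting above, there is a constant C > 0 independent of t ∈ (0,T] such that the non-negative minimizer φ₊(·,t) of J⁺_t satisfies ∫₀^t (φ₊'(·,t))² ≤ C t^{(2+q)/(2-q)}. -/

import Mathlib

/-!
Testing `J⁺_t` against `ψ = 0` gives `J⁺_t(φ₊) ≤ 0`, i.e.
`½ ∫ φ₊'² ≤ (γ_q²/2) ∫ φ₊² + (λ₊/q) ∫ |φ₊|^q`.
The sharp Wirtinger inequality `(π/t)² ∫ φ² ≤ ∫ φ'²` absorbs the quadratic term, because
`γ_q t ≤ γ_q T < π`. For `c (b - a) < π` it comes from the Picone identity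
`(φ² w)' = φ'² - c² φ² - (φ' - φ w)²`, where `w = c tan (c (m - x))` is centred at the midpoint `m`
and so is smooth on all of `[a, b]`; then let `c ↑ π / (b - a)`.
The `|φ|^q` term is bounded through `φ(x)² ≤ t ∫ φ'²`. This leaves
`C̄ E ≤ (λ₊/q) t^{(2+q)/2} E^{q/2}` for `E = ∫ φ₊'²`, and since `q/2 < 1` it gives
`E ≤ (λ₊/(q C̄))^{2/(2-q)} t^{(2+q)/(2-q)}`.
-/

open Set MeasureTheory

/-- Admissible class: `C¹` functions on `[0,t]` vanishing at the endpoints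
(a classical realization of `H¹₀(0,t)` for this smooth variational problem). -/
def Adm (t : ℝ) : Set (ℝ → ℝ) :=
  {φ : ℝ → ℝ | ContDiffOn ℝ 1 φ (Icc 0 t) ∧ φ 0 = 0 ∧ φ t = 0}

/-- The one-phase functional
`J⁺_t(φ) = ∫₀^t ((1/2)(φ')² - (γ_q²/2)φ² - (λ₊/q)|φ|^q)`. -/
noncomputable def Jplus (γq lp q t : ℝ) (φ : ℝ → ℝ) : ℝ :=
  ∫ x in Ioo (0 : ℝ) t,
    ((1 / 2) * (deriv φ x) ^ 2 - (γq ^ 2 / 2) * (φ x) ^ 2 - (lp / q) * |φ x| ^ q)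

open Filter Topology Real

section Wirtinger

variable {φ φ' w : ℝ → ℝ} {a b c : ℝ}

theorem HasDerivAt.sq_mul_of_riccati {x : ℝ} (hφ : HasDerivAt φ (φ' x) x)
    (hw : HasDerivAt w (-(c ^ 2 + w x ^ 2)) x) :
    HasDerivAt (fun y ↦ φ y ^ 2 * w y)
      (φ' x ^ 2 - c ^ 2 * φ x ^ 2 - (φ' x - φ x * w x) ^ 2) x := by
  refine ((hφ.pow 2).mul hw).congr_deriv ?_
  simp only [Pi.pow_apply]
  ring

theorem hasDerivAt_mul_tan_mul_sub {m x : ℝ} (hx : cos (c * (m - x)) ≠ 0) :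
    HasDerivAt (fun y ↦ c * tan (c * (m - y)))
      (-(c ^ 2 + (c * tan (c * (m - x))) ^ 2)) x := by
  have h := ((hasDerivAt_tan hx).comp x
    (((hasDerivAt_id x).const_sub m).const_mul c)).const_mul c
  refine h.congr_deriv ?_
  rw [tan_eq_sin_div_cos]
  field_simp
  linear_combination c ^ 2 * sin_sq_add_cos_sq (c * (m - x))

theorem mul_integral_sq_le_integral_deriv_sq_of_riccati (hab : a ≤ b)
    (hφ : ContinuousOn φ (Icc a b)) (hφ' : ContinuousOn φ' (Icc a b))
    (hderiv : ∀ x ∈ Ioo a b, HasDerivAt φ (φ' x) x) (ha : φ a = 0) (hb : φ b = 0)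
    (hw : ∀ x ∈ Icc a b, HasDerivAt w (-(c ^ 2 + w x ^ 2)) x) :
    c ^ 2 * ∫ x in a..b, φ x ^ 2 ≤ ∫ x in a..b, φ' x ^ 2 := by
  have hwc : ContinuousOn w (Icc a b) := fun x hx ↦ (hw x hx).continuousAt.continuousWithinAt
  have hint {f : ℝ → ℝ} (hf : ContinuousOn f (Icc a b)) : IntervalIntegrable f volume a b :=
    hf.intervalIntegrable_of_Icc hab
  have hpicone : ∫ x in a..b, (φ' x ^ 2 - c ^ 2 * φ x ^ 2 - (φ' x - φ x * w x) ^ 2) = 0 := by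
    rw [intervalIntegral.integral_eq_sub_of_hasDerivAt_of_le hab ((hφ.pow 2).mul hwc)
      (fun x hx ↦ (hderiv x hx).sq_mul_of_riccati (hw x (Ioo_subset_Icc_self hx)))
      (hint (by fun_prop))]
    simp [ha, hb]
  rw [intervalIntegral.integral_sub (hint (by fun_prop)) (hint (by fun_prop)),
    intervalIntegral.integral_sub (hint (by fun_prop)) (hint (by fun_prop)),
    intervalIntegral.integral_const_mul] at hpicone
  have hrem := intervalIntegral.integral_nonneg (μ := volume) hab
    fun x _ ↦ sq_nonneg (φ' x - φ x * w x)
  linarith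

theorem mul_integral_sq_le_integral_deriv_sq (hab : a ≤ b) (hc : |c| * (b - a) < π)
    (hφ : ContinuousOn φ (Icc a b)) (hφ' : ContinuousOn φ' (Icc a b))
    (hderiv : ∀ x ∈ Ioo a b, HasDerivAt φ (φ' x) x) (ha : φ a = 0) (hb : φ b = 0) :
    c ^ 2 * ∫ x in a..b, φ x ^ 2 ≤ ∫ x in a..b, φ' x ^ 2 := by
  refine mul_integral_sq_le_integral_deriv_sq_of_riccati hab hφ hφ' hderiv ha hb
    fun x hx ↦ hasDerivAt_mul_tan_mul_sub (m := (a + b) / 2) (cos_pos_of_mem_Ioo ?_).ne'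
  have hdist : |(a + b) / 2 - x| ≤ (b - a) / 2 :=
    abs_le.2 ⟨by linarith [hx.2], by linarith [hx.1]⟩
  have : |c * ((a + b) / 2 - x)| < π / 2 := by
    rw [abs_mul]
    nlinarith [abs_nonneg c]
  exact abs_lt.1 this

theorem integral_sq_le_integral_deriv_sq (hab : a < b)
    (hφ : ContinuousOn φ (Icc a b)) (hφ' : ContinuousOn φ' (Icc a b))
    (hderiv : ∀ x ∈ Ioo a b, HasDerivAt φ (φ' x) x) (ha : φ a = 0) (hb : φ b = 0) :
    (π / (b - a)) ^ 2 * ∫ x in a..b, φ x ^ 2 ≤ ∫ x in a..b, φ' x ^ 2 := by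
  have hlim : Tendsto (fun c ↦ c ^ 2 * ∫ x in a..b, φ x ^ 2) (𝓝[<] (π / (b - a)))
      (𝓝 ((π / (b - a)) ^ 2 * ∫ x in a..b, φ x ^ 2)) :=
    ((continuous_pow 2).mul continuous_const).continuousAt.tendsto.mono_left nhdsWithin_le_nhds
  refine le_of_tendsto hlim ?_
  filter_upwards [Ioo_mem_nhdsLT (div_pos pi_pos (sub_pos.2 hab))] with c hc
  refine mul_integral_sq_le_integral_deriv_sq hab.le ?_ hφ hφ' hderiv ha hb
  rw [abs_of_pos hc.1, ← lt_div_iff₀ (sub_pos.2 hab)]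
  exact hc.2

theorem sq_le_mul_integral_deriv_sq (hab : a ≤ b) (hφ : ContinuousOn φ (Icc a b))
    (hφ' : ContinuousOn φ' (Icc a b)) (hderiv : ∀ x ∈ Ioo a b, HasDerivAt φ (φ' x) x)
    (ha : φ a = 0) : φ b ^ 2 ≤ (b - a) * ∫ x in a..b, φ' x ^ 2 := by
  have hint {f : ℝ → ℝ} (hf : ContinuousOn f (Icc a b)) : IntervalIntegrable f volume a b :=
    hf.intervalIntegrable_of_Icc hab
  have hftc : ∫ x in a..b, φ' x = φ b := by
    rw [intervalIntegral.integral_eq_sub_of_hasDerivAt_of_le hab hφ hderiv (hint hφ'), ha,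
      sub_zero]
  -- Cauchy–Schwarz for `∫ φ' = φ b`, in the form `0 ≤ ∫ ((b - a) φ' - ∫ φ')²`.
  have hsq : ∫ x in a..b, ((b - a) * φ' x - φ b) ^ 2
      = (b - a) * ((b - a) * (∫ x in a..b, φ' x ^ 2) - φ b ^ 2) := by
    simp_rw [sub_sq, mul_pow]
    rw [intervalIntegral.integral_add (hint (by fun_prop)) (hint (by fun_prop)),
      intervalIntegral.integral_sub (hint (by fun_prop)) (hint (by fun_prop)),
      intervalIntegral.integral_const_mul, intervalIntegral.integral_mul_const,
      intervalIntegral.integral_const_mul, intervalIntegral.integral_const_mul, hftc,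
      intervalIntegral.integral_const, smul_eq_mul]
    ring
  have hnonneg := intervalIntegral.integral_nonneg (μ := volume) hab
    fun x _ ↦ sq_nonneg ((b - a) * φ' x - φ b)
  rw [hsq] at hnonneg
  rcases hab.eq_or_lt with rfl | hlt
  · simp [ha]
  · nlinarith [sub_pos.2 hlt]

theorem sq_le_mul_integral_deriv_sq_of_mem_Icc (hφ : ContinuousOn φ (Icc a b))
    (hφ' : ContinuousOn φ' (Icc a b)) (hderiv : ∀ x ∈ Ioo a b, HasDerivAt φ (φ' x) x)
    (ha : φ a = 0) {x : ℝ} (hx : x ∈ Icc a b) :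
    φ x ^ 2 ≤ (b - a) * ∫ y in a..b, φ' y ^ 2 := by
  have hsub : Icc a x ⊆ Icc a b := Icc_subset_Icc_right hx.2
  calc φ x ^ 2 ≤ (x - a) * ∫ y in a..x, φ' y ^ 2 :=
        sq_le_mul_integral_deriv_sq hx.1 (hφ.mono hsub) (hφ'.mono hsub)
          (fun y hy ↦ hderiv y ⟨hy.1, hy.2.trans_le hx.2⟩) ha
    _ ≤ (b - a) * ∫ y in a..b, φ' y ^ 2 := by
        refine mul_le_mul (by linarith [hx.2]) ?_
          (intervalIntegral.integral_nonneg hx.1 fun y _ ↦ sq_nonneg _) (by linarith [hx.1, hx.2])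
        exact intervalIntegral.integral_mono_interval le_rfl hx.1 hx.2
          (Eventually.of_forall fun y ↦ sq_nonneg _)
          ((hφ'.pow 2).intervalIntegrable_of_Icc (hx.1.trans hx.2))

end Wirtinger

theorem integral_rpow_abs_le_of_sq_le {f : ℝ → ℝ} {a b q K : ℝ} (hab : a ≤ b) (hq : 0 ≤ q)
    (hf : ∀ x ∈ Ioc a b, f x ^ 2 ≤ K) : ∫ x in a..b, |f x| ^ q ≤ (b - a) * K ^ (q / 2) := by
  have hbound : ∀ x ∈ uIoc a b, ‖|f x| ^ q‖ ≤ K ^ (q / 2) := by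
    intro x hx
    rw [uIoc_of_le hab] at hx
    calc ‖|f x| ^ q‖ = (|f x| ^ (2 : ℝ)) ^ (q / 2) := by
          rw [Real.norm_of_nonneg (by positivity), ← rpow_mul (abs_nonneg _)]
          ring_nf
      _ ≤ K ^ (q / 2) := by
          rw [rpow_two, sq_abs]
          exact rpow_le_rpow (sq_nonneg _) (hf x hx) (by positivity)
  have := intervalIntegral.norm_integral_le_of_norm_le_const hbound
  rw [abs_of_nonneg (sub_nonneg.2 hab), mul_comm] at this
  exact (le_abs_self _).trans this

theorem le_div_rpow_of_mul_le_mul_rpow {E A B p : ℝ} (hE : 0 ≤ E) (hA : 0 ≤ A) (hB : 0 < B)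
    (hp : p < 1) (h : B * E ≤ A * E ^ p) : E ≤ (A / B) ^ (1 - p)⁻¹ := by
  rcases hE.eq_or_lt with rfl | hE
  · positivity
  have hsplit : E = E ^ (1 - p) * E ^ p := by rw [← rpow_add hE, sub_add_cancel, rpow_one]
  have hroot : E ^ (1 - p) ≤ A / B := by
    rw [le_div_iff₀ hB, mul_comm]
    refine le_of_mul_le_mul_right ?_ (rpow_pos_of_pos hE p)
    rwa [mul_assoc, ← hsplit]
  calc E = (E ^ (1 - p)) ^ (1 - p)⁻¹ := by
        rw [← rpow_mul hE.le, mul_inv_cancel₀ (sub_pos.2 hp).ne', rpow_one]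
    _ ≤ (A / B) ^ (1 - p)⁻¹ := by gcongr

theorem setIntegral_Ioo_deriv_eq_intervalIntegral {a b : ℝ} (φ : ℝ → ℝ) (F : ℝ → ℝ → ℝ)
    (hab : a ≤ b) :
    ∫ x in Ioo a b, F x (deriv φ x) = ∫ x in a..b, F x (derivWithin φ (Icc a b) x) := by
  rw [intervalIntegral.integral_of_le hab, integral_Ioc_eq_integral_Ioo]
  refine setIntegral_congr_fun measurableSet_Ioo fun x hx ↦ ?_
  rw [derivWithin_of_mem_nhds (Icc_mem_nhds hx.1 hx.2)]

theorem ContDiffOn.hasDerivAt_derivWithin_Icc {φ : ℝ → ℝ} {a b x : ℝ}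
    (hφ : ContDiffOn ℝ 1 φ (Icc a b)) (hx : x ∈ Ioo a b) :
    HasDerivAt φ (derivWithin φ (Icc a b) x) x := by
  have hnhds := Icc_mem_nhds hx.1 hx.2
  rw [derivWithin_of_mem_nhds hnhds]
  exact ((hφ.contDiffAt hnhds).differentiableAt one_ne_zero).hasDerivAt

section Jplus

variable {φ : ℝ → ℝ} {γ lp q t : ℝ}

theorem Jplus_eq_intervalIntegral (hq : 0 ≤ q) (ht : 0 < t) (hφ : ContDiffOn ℝ 1 φ (Icc 0 t)) :
    Jplus γ lp q t φ = 1 / 2 * (∫ x in 0..t, derivWithin φ (Icc 0 t) x ^ 2)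
      - γ ^ 2 / 2 * (∫ x in 0..t, φ x ^ 2) - lp / q * ∫ x in 0..t, |φ x| ^ q := by
  have hφc := hφ.continuousOn
  have hφ'c := hφ.continuousOn_derivWithin (uniqueDiffOn_Icc ht) le_rfl
  have habs : ContinuousOn (fun x ↦ |φ x| ^ q) (Icc 0 t) :=
    hφc.abs.rpow_const fun _ _ ↦ Or.inr hq
  have hint {f : ℝ → ℝ} (hf : ContinuousOn f (Icc 0 t)) : IntervalIntegrable f volume 0 t :=
    hf.intervalIntegrable_of_Icc ht.le
  rw [Jplus, setIntegral_Ioo_deriv_eq_intervalIntegral φ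
      (fun x d ↦ 1 / 2 * d ^ 2 - γ ^ 2 / 2 * φ x ^ 2 - lp / q * |φ x| ^ q) ht.le,
    intervalIntegral.integral_sub (hint (by fun_prop)) (hint (by fun_prop)),
    intervalIntegral.integral_sub (hint (by fun_prop)) (hint (by fun_prop)),
    intervalIntegral.integral_const_mul, intervalIntegral.integral_const_mul,
    intervalIntegral.integral_const_mul]

theorem Jplus_zero (hq : q ≠ 0) : Jplus γ lp q t (fun _ ↦ 0) = 0 := by
  simp [Jplus, zero_rpow hq]

theorem zero_mem_Adm (t : ℝ) : (fun _ ↦ (0 : ℝ)) ∈ Adm t := ⟨contDiffOn_const, rfl, rfl⟩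

theorem mul_energy_le_of_Jplus_nonpos (hq : 0 < q) (hlp : 0 ≤ lp) (ht : 0 < t)
    (hφ : φ ∈ Adm t) (hJ : Jplus γ lp q t φ ≤ 0) :
    (1 - (γ * t / π) ^ 2) / 2 * ∫ x in Ioo 0 t, deriv φ x ^ 2
      ≤ lp / q * t ^ ((2 + q) / 2) * (∫ x in Ioo 0 t, deriv φ x ^ 2) ^ (q / 2) := by
  obtain ⟨hφ1, hφ0, hφt⟩ := hφ
  have hφc := hφ1.continuousOn
  have hφ'c := hφ1.continuousOn_derivWithin (uniqueDiffOn_Icc ht) le_rfl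
  have hderiv (x : ℝ) (hx : x ∈ Ioo 0 t) := hφ1.hasDerivAt_derivWithin_Icc hx
  rw [setIntegral_Ioo_deriv_eq_intervalIntegral φ (fun _ d ↦ d ^ 2) ht.le]
  rw [Jplus_eq_intervalIntegral hq.le ht hφ1] at hJ
  set E := ∫ x in 0..t, derivWithin φ (Icc 0 t) x ^ 2
  set P := ∫ x in 0..t, φ x ^ 2
  set Q := ∫ x in 0..t, |φ x| ^ q
  have hE : 0 ≤ E := intervalIntegral.integral_nonneg ht.le fun _ _ ↦ sq_nonneg _
  have hP : P ≤ (t / π) ^ 2 * E := by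
    have := integral_sq_le_integral_deriv_sq ht hφc hφ'c hderiv hφ0 hφt
    rw [sub_zero] at this
    field_simp at this ⊢
    linarith
  have hQ : Q ≤ t ^ ((2 + q) / 2) * E ^ (q / 2) := calc
    Q ≤ (t - 0) * ((t - 0) * E) ^ (q / 2) :=
      integral_rpow_abs_le_of_sq_le ht.le hq.le fun x hx ↦
        sq_le_mul_integral_deriv_sq_of_mem_Icc hφc hφ'c hderiv hφ0 (Ioc_subset_Icc_self hx)
    _ = t ^ ((2 + q) / 2) * E ^ (q / 2) := by
      rw [sub_zero, mul_rpow ht.le hE, ← mul_assoc, ← rpow_one_add' ht.le (by positivity)]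
      ring_nf
  have hγP := mul_le_mul_of_nonneg_left hP (by positivity : 0 ≤ γ ^ 2 / 2)
  have hlpQ := mul_le_mul_of_nonneg_left hQ (by positivity : 0 ≤ lp / q)
  have hsplit : (1 - (γ * t / π) ^ 2) / 2 * E = 1 / 2 * E - γ ^ 2 / 2 * ((t / π) ^ 2 * E) := by
    ring
  linarith

end Jplus

theorem Jplus_minimizer_energy_bound_general (k : ℕ) (q lp : ℝ)
    (hq1 : 1 ≤ q) (hq2 : q < 2) (hlp : 0 < lp)
    (hkγ : (2 / (2 - q)) ^ 2 < (k : ℝ) ^ 2 / 4) :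
    ∃ C : ℝ, 0 < C ∧
      ∀ t ∈ Ioc (0 : ℝ) (2 * Real.pi / k), ∀ φ ∈ Adm t,
        (∀ x ∈ Icc (0 : ℝ) t, 0 ≤ φ x) →
        (∀ ψ ∈ Adm t, Jplus (2 / (2 - q)) lp q t φ ≤ Jplus (2 / (2 - q)) lp q t ψ) →
        (∫ x in Ioo (0 : ℝ) t, (deriv φ x) ^ 2) ≤ C * t ^ ((2 + q) / (2 - q)) := by
  set γ := 2 / (2 - q)
  have hq : 0 < q := by linarith
  have hk : 0 < (k : ℝ) := by
    have : 0 < (k : ℝ) ^ 2 := by nlinarith [sq_nonneg γ]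
    exact lt_of_le_of_ne k.cast_nonneg (by rintro h; simp [← h] at this)
  -- the paper's `C̄ = (1 - T² γ_q² / π²) / 2` with `T = 2π / k`
  set Cb := (1 - (2 * γ / k) ^ 2) / 2 with hCb_def
  have hCb : 0 < Cb := by
    have : (2 * γ / k) ^ 2 < 1 := by rw [div_pow, div_lt_one (by positivity)]; linarith
    linarith [hCb_def]
  refine ⟨(lp / q / Cb) ^ (1 - q / 2)⁻¹, by positivity, ?_⟩
  rintro t ⟨ht, htT⟩ φ hφ - hmin
  have hJ : Jplus γ lp q t φ ≤ 0 := (hmin _ (zero_mem_Adm t)).trans_eq (Jplus_zero hq.ne')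
  have hCb_le : Cb ≤ (1 - (γ * t / π) ^ 2) / 2 := by
    have : γ * t / π ≤ 2 * γ / k := by
      rw [div_le_div_iff₀ pi_pos hk]
      rw [le_div_iff₀ hk] at htT
      nlinarith [(by positivity : 0 ≤ γ)]
    have : (γ * t / π) ^ 2 ≤ (2 * γ / k) ^ 2 := pow_le_pow_left₀ (by positivity) this 2
    linarith [hCb_def]
  have hE : 0 ≤ ∫ x in Ioo 0 t, deriv φ x ^ 2 :=
    setIntegral_nonneg measurableSet_Ioo fun _ _ ↦ sq_nonneg _
  calc _ ≤ (lp / q * t ^ ((2 + q) / 2) / Cb) ^ (1 - q / 2)⁻¹ :=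
        le_div_rpow_of_mul_le_mul_rpow hE (by positivity) hCb (by linarith)
          ((mul_le_mul_of_nonneg_right hCb_le hE).trans
            (mul_energy_le_of_Jplus_nonpos hq hlp.le ht hφ hJ))
    _ = (lp / q / Cb) ^ (1 - q / 2)⁻¹ * t ^ ((2 + q) / (2 - q)) := by
        rw [mul_div_right_comm, mul_rpow (by positivity) (by positivity), ← rpow_mul ht.le]
        congr 2
        field_simp

/-- there is `C > 0`, independent of `t ∈ (0,T]`, such that every
non-negative minimizer `φ₊(·,t)` of `J⁺_t` satisfies
`∫₀^t (φ₊'(·,t))² ≤ C t^{(2+q)/(2-q)}`. -/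
theorem Jplus_minimizer_energy_bound (k : ℕ) (hk : 1 ≤ k) (q lp : ℝ)
    (hq1 : 1 ≤ q) (hq2 : q < 2) (hlp : 0 < lp)
    (hkγ : (2 / (2 - q)) ^ 2 < (k : ℝ) ^ 2 / 4) :
    ∃ C : ℝ, 0 < C ∧
      ∀ t ∈ Ioc (0 : ℝ) (2 * Real.pi / k), ∀ φ ∈ Adm t,
        (∀ x ∈ Icc (0 : ℝ) t, 0 ≤ φ x) →
        (∀ ψ ∈ Adm t, Jplus (2 / (2 - q)) lp q t φ ≤ Jplus (2 / (2 - q)) lp q t ψ) →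
        (∫ x in Ioo (0 : ℝ) t, (deriv φ x) ^ 2) ≤ C * t ^ ((2 + q) / (2 - q)) :=
  Jplus_minimizer_energy_bound_general k q lp hq1 hq2 hlp hkγ
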